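/- arXiv:2008.10142 — 6 statements merged into one kernel-verified Lean document; each statement's English description precedes it below -/
import Mathlib

section
/- For every integer g ≥ 2, the set of matrices A ∈ Sp(2g, ℤ) whose leading eigenvalue (a real eigenvalue μ > 1 with |α| ≤ μ for all complex eigenvalues α of A) is a bi-Perron algebraic integer and for which every complex root of the characteristic polynomial of A has multiplicity at least 2 is infinite. -/
/-!
Let `M_n = !![n + 2, 1; n + 1, 1] ∈ SL₂(ℤ)` act diagonally on `ℤ^g ⊕ ℤ^g`, i.e. take
`A_n = M_n ⊗ I_g`. Every `2 × 2` matrix satisfies `Mᵀ J₂ M = (det M) J₂`, so `A_n` is symplectic,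
and its characteristic polynomial is `(X² - (n + 3) X + 1)^g`. The roots of this quadratic are a
reciprocal pair `μ, μ⁻¹` with `μ > 1`, so `μ` is a bi-Perron unit, it dominates the spectrum, and
every eigenvalue has multiplicity `g ≥ 2`.
-/

open Matrix Polynomial
open scoped Kronecker

namespace Matrix

variable {R : Type*} [CommRing R] {g : ℕ}

variable (g) in
def blockScalar (M : Matrix (Fin 2) (Fin 2) R) : Matrix (Fin g ⊕ Fin g) (Fin g ⊕ Fin g) R :=
  fromBlocks (M 0 0 • 1) (M 0 1 • 1) (M 1 0 • 1) (M 1 1 • 1)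

theorem blockScalar_eq_reindex_kronecker (M : Matrix (Fin 2) (Fin 2) R) :
    blockScalar g M =
      reindex (finTwoEquiv.prodCongr (.refl _) |>.trans (Equiv.boolProdEquivSum _))
        (finTwoEquiv.prodCongr (.refl _) |>.trans (Equiv.boolProdEquivSum _))
        (M ⊗ₖ (1 : Matrix (Fin g) (Fin g) R)) := by
  ext (i | i) (j | j) <;> simp [blockScalar, Equiv.boolProdEquivSum, finTwoEquiv, one_apply]

theorem blockScalar_injective (hg : g ≠ 0) :
    Function.Injective (blockScalar g : Matrix (Fin 2) (Fin 2) R → _) := by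
  intro M N h
  rw [blockScalar_eq_reindex_kronecker, blockScalar_eq_reindex_kronecker] at h
  have i₀ : Fin g := ⟨0, Nat.pos_of_ne_zero hg⟩
  ext a b
  simpa using congr_fun₂ ((reindex _ _).injective h) (a, i₀) (b, i₀)

theorem blockScalar_mul (M N : Matrix (Fin 2) (Fin 2) R) :
    blockScalar g M * blockScalar g N = blockScalar g (M * N) := by
  simp only [blockScalar_eq_reindex_kronecker, reindex_apply, submatrix_mul_equiv,
    ← mul_kronecker_mul, mul_one]

theorem blockScalar_transpose (M : Matrix (Fin 2) (Fin 2) R) :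
    (blockScalar g M)ᵀ = blockScalar g Mᵀ := by
  simp [blockScalar, fromBlocks_transpose]

theorem det_blockScalar (M : Matrix (Fin 2) (Fin 2) R) : (blockScalar g M).det = M.det ^ g := by
  rw [blockScalar_eq_reindex_kronecker, det_reindex_self, det_kronecker]
  simp

theorem charmatrix_blockScalar (M : Matrix (Fin 2) (Fin 2) R) :
    charmatrix (blockScalar g M) = blockScalar g (charmatrix M) := by
  ext (i | i) (j | j) <;> by_cases h : i = j <;> simp [blockScalar, h]

theorem charpoly_blockScalar (M : Matrix (Fin 2) (Fin 2) R) :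
    (blockScalar g M).charpoly = M.charpoly ^ g := by
  rw [charpoly, charmatrix_blockScalar, det_blockScalar, charpoly]

theorem blockScalar_symplecticForm :
    blockScalar g !![0, 1; -1, 0] =
      (fromBlocks 0 1 (-1) 0 : Matrix (Fin g ⊕ Fin g) (Fin g ⊕ Fin g) R) := by
  simp [blockScalar]

theorem fin_two_transpose_mul_symplecticForm_mul (M : Matrix (Fin 2) (Fin 2) R)
    (h : M.det = 1) : Mᵀ * !![0, 1; -1, 0] * M = !![0, 1; -1, 0] := by
  rw [det_fin_two] at h
  ext i j
  fin_cases i <;> fin_cases j <;> simp [Matrix.mul_apply, Fin.sum_univ_two] <;> grind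

theorem blockScalar_transpose_mul_symplecticForm_mul (M : Matrix (Fin 2) (Fin 2) R)
    (h : M.det = 1) :
    (blockScalar g M)ᵀ * fromBlocks 0 1 (-1) 0 * blockScalar g M = fromBlocks 0 1 (-1) 0 := by
  rw [← blockScalar_symplecticForm, blockScalar_transpose, blockScalar_mul, blockScalar_mul,
    fin_two_transpose_mul_symplecticForm_mul M h]

end Matrix

theorem Polynomial.le_rootMultiplicity_pow {R : Type*} [CommRing R] [IsDomain R] {p : R[X]}
    {a : R} (hp : p ≠ 0) (ha : p.IsRoot a) (n : ℕ) : n ≤ rootMultiplicity a (p ^ n) := by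
  rw [le_rootMultiplicity_iff (pow_ne_zero n hp)]
  exact pow_dvd_pow_of_dvd (dvd_iff_isRoot.2 ha) n

theorem X_sq_sub_C_mul_X_add_one_eq_mul {K : Type*} [Field K] {r t : K}
    (hr : r ^ 2 - t * r + 1 = 0) : (X ^ 2 - C t * X + 1 : K[X]) = (X - C r) * (X - C r⁻¹) := by
  have hr0 : r ≠ 0 := by rintro rfl; simp at hr
  have ht : t = r + r⁻¹ := by field_simp; linear_combination -hr
  calc (X ^ 2 - C t * X + 1 : K[X]) = X ^ 2 - C (r + r⁻¹) * X + C (r * r⁻¹) := by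
        rw [mul_inv_cancel₀ hr0, C_1, ht]
    _ = (X - C r) * (X - C r⁻¹) := by simp only [C_add, C_mul]; ring

theorem isIntegral_of_sq_sub_mul_add_one {A : Type*} [CommRing A] {x : A} (t : ℤ)
    (h : x ^ 2 - t * x + 1 = 0) : IsIntegral ℤ x :=
  ⟨X ^ 2 - C t * X + 1, by monicity!, by rw [← aeval_def]; simpa using h⟩

theorem exists_one_lt_root_sq_sub_mul_add_one {t : ℝ} (ht : 2 < t) :
    ∃ μ : ℝ, 1 < μ ∧ μ ^ 2 - t * μ + 1 = 0 := by
  have hdisc := Real.sq_sqrt (show 0 ≤ t ^ 2 - 4 by nlinarith)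
  refine ⟨(t + √(t ^ 2 - 4)) / 2, ?_, by linear_combination hdisc / 4⟩
  linarith [Real.sqrt_nonneg (t ^ 2 - 4)]

theorem eq_or_eq_inv_of_isRoot_minpoly {μ : ℝ} {t : ℤ} (h : μ ^ 2 - t * μ + 1 = 0) {z : ℂ}
    (hz : ((minpoly ℚ μ).map (algebraMap ℚ ℂ)).IsRoot z) : z = μ ∨ z = (μ : ℂ)⁻¹ := by
  have hdvd : minpoly ℚ μ ∣ X ^ 2 - C (t : ℚ) * X + 1 := minpoly.dvd ℚ μ (by simpa using h)
  have hμ : (μ : ℂ) ^ 2 - t * μ + 1 = 0 := by exact_mod_cast congrArg Complex.ofReal h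
  have hz' : (X ^ 2 - C (t : ℂ) * X + 1 : ℂ[X]).IsRoot z := by
    simpa using hz.dvd (Polynomial.map_dvd (algebraMap ℚ ℂ) hdvd)
  rw [X_sq_sub_C_mul_X_add_one_eq_mul hμ] at hz'
  simpa [sub_eq_zero] using hz'

theorem one_div_le_norm_and_norm_le_of_eq_or_eq_inv {μ : ℝ} (hμ : 1 < μ) {z : ℂ}
    (hz : z = μ ∨ z = (μ : ℂ)⁻¹) : 1 / μ ≤ ‖z‖ ∧ ‖z‖ ≤ μ := by
  have hinv : 1 / μ ≤ μ := (div_le_one₀ (by linarith)).2 hμ.le |>.trans hμ.le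
  rcases hz with rfl | rfl <;> simpa [abs_of_pos (by linarith : 0 < μ)] using hinv

/-- For every integer `g ≥ 2`, the set of matrices `A ∈ Sp(2g, ℤ)` whose leading
eigenvalue is a bi-Perron algebraic integer and all of whose complex eigenvalues have
multiplicity at least `2` as roots of the characteristic polynomial is infinite. -/
theorem infinite_symplectic_biPerron_no_simple_eigenvalue (g : ℕ) (hg : 2 ≤ g) :
    { A : Matrix (Fin g ⊕ Fin g) (Fin g ⊕ Fin g) ℤ |
      Aᵀ * Matrix.fromBlocks 0 1 (-1) 0 * A = Matrix.fromBlocks 0 1 (-1) 0 ∧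
      ∃ μ : ℝ, 1 < μ ∧
        (A.map (Int.cast : ℤ → ℂ)).charpoly.IsRoot (μ : ℂ) ∧
        (∀ α : ℂ, (A.map (Int.cast : ℤ → ℂ)).charpoly.IsRoot α → ‖α‖ ≤ μ) ∧
        IsIntegral ℤ μ ∧
        (∀ z : ℂ, ((minpoly ℚ μ).map (algebraMap ℚ ℂ)).IsRoot z →
          1 / μ ≤ ‖z‖ ∧ ‖z‖ ≤ μ) ∧
        (∀ α : ℂ, (A.map (Int.cast : ℤ → ℂ)).charpoly.IsRoot α →
          2 ≤ Polynomial.rootMultiplicity α (A.map (Int.cast : ℤ → ℂ)).charpoly) }.Infinite := by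
  have hg0 : g ≠ 0 := by omega
  let M : ℕ → Matrix (Fin 2) (Fin 2) ℤ := fun n => !![(n : ℤ) + 2, 1; (n : ℤ) + 1, 1]
  have hM : M.Injective := fun m n h => by simpa [M] using congr_fun₂ h 0 0
  refine Set.infinite_of_injective_forall_mem (f := fun n => blockScalar g (M n))
    ((blockScalar_injective hg0).comp hM) fun n => ?_
  obtain ⟨μ, hμ, hμt⟩ := exists_one_lt_root_sq_sub_mul_add_one (t := (((n : ℤ) + 3 : ℤ) : ℝ))
    (by push_cast; linarith [n.cast_nonneg (α := ℝ)])
  have hμC : (μ : ℂ) ^ 2 - (((n : ℤ) + 3 : ℤ) : ℂ) * μ + 1 = 0 := by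
    exact_mod_cast congrArg Complex.ofReal hμt
  have hchar : ((blockScalar g (M n)).map (Int.cast : ℤ → ℂ)).charpoly =
      ((X - C (μ : ℂ)) * (X - C (μ : ℂ)⁻¹)) ^ g := by
    rw [← X_sq_sub_C_mul_X_add_one_eq_mul hμC, show (Int.cast : ℤ → ℂ) = Int.castRingHom ℂ from rfl,
      charpoly_map, charpoly_blockScalar, charpoly_fin_two]
    simp [M, trace_fin_two, det_fin_two, add_assoc, map_ofNat C]
  have hroots : ∀ α : ℂ, ((blockScalar g (M n)).map (Int.cast : ℤ → ℂ)).charpoly.IsRoot α ↔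
      α = μ ∨ α = (μ : ℂ)⁻¹ := by
    simp [hchar, hg0, sub_eq_zero]
  refine ⟨blockScalar_transpose_mul_symplecticForm_mul _ (by simp [M, det_fin_two]), μ, hμ,
    (hroots μ).2 (.inl rfl),
    fun α hα => (one_div_le_norm_and_norm_le_of_eq_or_eq_inv hμ ((hroots α).1 hα)).2,
    isIntegral_of_sq_sub_mul_add_one _ hμt,
    fun z hz =>
      one_div_le_norm_and_norm_le_of_eq_or_eq_inv hμ (eq_or_eq_inv_of_isRoot_minpoly hμt hz),
    fun α hα => ?_⟩
  rw [hchar] at hα ⊢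
  exact hg.trans (le_rootMultiplicity_pow (mul_ne_zero (X_sub_C_ne_zero _) (X_sub_C_ne_zero _))
    (by simpa [hg0] using hα) g)
end

section
/- Let g ≥ 1, let Y be a symmetric g × g real matrix, and let A be the 2g × 2g block matrix [[I_g + Y², Y], [Y, I_g]]. Then for every real number x ≠ 0, det(x·I_{2g} − A) = x^g · det( ((x−1)²/x)·I_g − Y² ); equivalently, the characteristic polynomial p_A of A satisfies p_A(x) = x^g · p_{Y²}((x−1)²/x) for all x ≠ 0, where p_{Y²} is the characteristic polynomial of Y². -/
/-!
With `A = [[1 + Y², Y], [Y, 1]]` and `c = x - 1`, the matrix `x • 1 - A` is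
`[[c - Y², -Y], [-Y, c]]`, whose lower right block is central. Multiplying on the right by
`[[c, 0], [Y, 1]]` kills the lower left block, so
`det (x • 1 - A) * c ^ g = det (c (c - Y²) - Y²) * c ^ g = det ((x - 1)² - x Y²) * c ^ g`.
Cancelling `c ^ g` is legitimate for the generic point `x = X` of `R[X]`, where `X - 1` is monic,
and evaluating at `x` gives the identity everywhere. Finally `(x - 1)² - x Y² = x ((x - 1)² / x - Y²)`.
-/

open Matrix Polynomial

namespace Matrix

variable {n R : Type*} [Fintype n] [DecidableEq n] [CommRing R]

theorem det_fromBlocks_smul_one_of_isRegular (A B C : Matrix n n R) {c : R} (hc : IsRegular c) :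
    det (fromBlocks A B C (c • 1)) = det (c • A - B * C) := by
  have hmul : fromBlocks A B C (c • 1) * fromBlocks (c • 1) 0 (-C) 1 =
      fromBlocks (c • A - B * C) B 0 (c • 1) := by
    simp only [fromBlocks_multiply, Matrix.mul_smul, mul_one, mul_zero, mul_neg, smul_one_mul,
      zero_add, add_neg_cancel, sub_eq_add_neg]
  have hdet := congrArg det hmul
  rw [det_mul, det_fromBlocks_zero₁₂, det_fromBlocks_zero₂₁, det_one, mul_one, det_smul, det_one,
    mul_one] at hdet
  exact (hc.pow _).right hdet

theorem det_smul_one_sub_fromBlocks_of_isRegular (Y : Matrix n n R) {x : R}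
    (hx : IsRegular (x - 1)) :
    det (x • 1 - fromBlocks (1 + Y ^ 2) Y Y 1) = det ((x - 1) ^ 2 • 1 - x • Y ^ 2) := by
  have hblocks : x • 1 - fromBlocks (1 + Y ^ 2) Y Y 1 =
      fromBlocks ((x - 1) • 1 - Y ^ 2) (-Y) (-Y) ((x - 1) • 1) := by
    rw [← fromBlocks_one, fromBlocks_smul, sub_eq_add_neg, fromBlocks_neg, fromBlocks_add]
    congr 1 <;> module
  rw [hblocks, det_fromBlocks_smul_one_of_isRegular _ _ _ hx, neg_mul_neg, ← sq]
  congr 1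
  module

theorem det_smul_one_sub_fromBlocks (Y : Matrix n n R) (x : R) :
    det (x • 1 - fromBlocks (1 + Y ^ 2) Y Y 1) = det ((x - 1) ^ 2 • 1 - x • Y ^ 2) := by
  have hX : IsRegular (X - 1 : R[X]) := by simpa using (monic_X_sub_C (1 : R)).isRegular
  set f := evalRingHom x
  have h := congrArg f (det_smul_one_sub_fromBlocks_of_isRegular (Y.map C) hX)
  have hY : (Y.map C).map f = Y := by ext; simp [f]
  rw [RingHom.map_det, RingHom.map_det, RingHom.mapMatrix_apply, RingHom.mapMatrix_apply] at h
  simp only [Matrix.map_sub _ (map_sub f), Matrix.map_add _ (map_add f),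
    Matrix.map_smul' _ _ _ (map_mul f), Matrix.map_pow, fromBlocks_map,
    Matrix.map_one _ (map_zero f) (map_one f), hY] at h
  simpa [f] using h

end Matrix

theorem charpoly_blockMatrix_eval_general (g : ℕ) (Y : Matrix (Fin g) (Fin g) ℝ)
    (x : ℝ) (hx : x ≠ 0) :
    det (x • (1 : Matrix (Fin g ⊕ Fin g) (Fin g ⊕ Fin g) ℝ) -
          Matrix.fromBlocks (1 + Y ^ 2) Y Y 1) =
        x ^ g * det (((x - 1) ^ 2 / x) • (1 : Matrix (Fin g) (Fin g) ℝ) - Y ^ 2) ∧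
      (Matrix.fromBlocks (1 + Y ^ 2) Y Y 1).charpoly.eval x =
        x ^ g * (Y ^ 2).charpoly.eval ((x - 1) ^ 2 / x) := by
  have hdet : det (x • (1 : Matrix (Fin g ⊕ Fin g) (Fin g ⊕ Fin g) ℝ) -
      fromBlocks (1 + Y ^ 2) Y Y 1) =
        x ^ g * det (((x - 1) ^ 2 / x) • (1 : Matrix (Fin g) (Fin g) ℝ) - Y ^ 2) := by
    rw [det_smul_one_sub_fromBlocks]
    calc det ((x - 1) ^ 2 • 1 - x • Y ^ 2)
        = det (x • (((x - 1) ^ 2 / x) • 1 - Y ^ 2)) := by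
          rw [smul_sub, smul_smul, mul_div_cancel₀ _ hx]
      _ = _ := by rw [det_smul, Fintype.card_fin]
  refine ⟨hdet, ?_⟩
  simpa only [eval_charpoly, scalar_apply, ← smul_one_eq_diagonal] using hdet

/-- For `g ≥ 1`, `Y` a symmetric `g × g` real matrix and
`A = [[I + Y², Y], [Y, I]]`, for every real `x ≠ 0` we have
`det(x·I − A) = x^g · det(((x−1)²/x)·I − Y²)`; equivalently the characteristic polynomial
satisfies `p_A(x) = x^g · p_{Y²}((x−1)²/x)`. -/
theorem charpoly_blockMatrix_eval (g : ℕ) (hg : 1 ≤ g) (Y : Matrix (Fin g) (Fin g) ℝ)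
    (hY : Y.IsSymm) (x : ℝ) (hx : x ≠ 0) :
    det (x • (1 : Matrix (Fin g ⊕ Fin g) (Fin g ⊕ Fin g) ℝ) -
          Matrix.fromBlocks (1 + Y ^ 2) Y Y 1) =
        x ^ g * det (((x - 1) ^ 2 / x) • (1 : Matrix (Fin g) (Fin g) ℝ) - Y ^ 2) ∧
      (Matrix.fromBlocks (1 + Y ^ 2) Y Y 1).charpoly.eval x =
        x ^ g * (Y ^ 2).charpoly.eval ((x - 1) ^ 2 / x) :=
  charpoly_blockMatrix_eval_general g Y x hx
end

section
/- Let g ≥ 2 and let a, b be integers. Let Y be the g × g integer matrix whose upper-left 2 × 2 block is [[a, b], [b, −a]] and all of whose other entries are 0, and let A be the 2g × 2g block matrix [[I_g + Y², Y], [Y, I_g]]. Then the characteristic polynomial of A equals (X − 1)^{2g−4} · (X² − (a² + b² + 2)X + 1)². -/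
/-!
The Schur complement of the scalar block `(X - 1)•I` in `X•I - A` gives
`charpoly A = det((X - 1)²•I - X•Y²)`; no inverse is needed since `X - 1` is monic, hence a
non-zero-divisor. Moreover `Y² = (a² + b²)(E₀₀ + E₁₁)` because
`[[a, b], [b, -a]]` squares to `(a² + b²)•I₂`. The determinant is then diagonal, with two
entries `(X - 1)² - (a² + b²)X` and `g - 2` entries `(X - 1)²`.
-/

open Matrix Polynomial

namespace Matrix

variable {n R : Type*} [Fintype n] [DecidableEq n] [CommRing R]

theorem det_fromBlocks_smul_one₂₂ {c : R} (hc : IsRegular c) (A B C : Matrix n n R) :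
    (fromBlocks A B C (c • 1)).det = (c • A - B * C).det := by
  have hmul : fromBlocks A B C (c • 1) * fromBlocks (c • 1) 0 (-C) 1 =
      fromBlocks (c • A - B * C) B 0 (c • 1) := by
    simp [fromBlocks_multiply, sub_eq_add_neg]
  have hdet := congrArg det hmul
  rw [det_mul, det_fromBlocks_zero₁₂, det_fromBlocks_zero₂₁, det_one, mul_one, det_smul,
    det_one, mul_one] at hdet
  exact (hc.pow _).right.eq_iff.mp hdet

theorem charpoly_fromBlocks_one_add_sq (Y : Matrix n n R) :
    (fromBlocks (1 + Y ^ 2) Y Y 1).charpoly =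
      (((X : R[X]) - 1) ^ 2 • 1 - (X : R[X]) • (Y ^ 2).map C).det := by
  rw [charpoly, charmatrix_fromBlocks, charmatrix_one, ← smul_one_eq_diagonal,
    det_fromBlocks_smul_one₂₂ (monic_X_sub_C 1).isRegular]
  congr 1
  rw [charmatrix, neg_mul_neg, map_add, map_one, scalar_apply, ← smul_one_eq_diagonal,
    RingHom.mapMatrix_apply, ← Matrix.map_mul, ← sq]
  module

theorem det_smul_one_sub_smul_diagonal (c e : R) (d : n → R) :
    (c • 1 - e • diagonal d).det = ∏ i, (c - e * d i) := by
  rw [smul_one_eq_diagonal, ← diagonal_smul, diagonal_sub, det_diagonal]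
  rfl

end Matrix

variable {R : Type*} [CommRing R]

def cornerReflection (g : ℕ) (a b : R) : Matrix (Fin g) (Fin g) R :=
  of fun i j =>
    if i.val = 0 ∧ j.val = 0 then a
    else if (i.val = 0 ∧ j.val = 1) ∨ (i.val = 1 ∧ j.val = 0) then b
    else if i.val = 1 ∧ j.val = 1 then -a else 0

theorem cornerReflection_sq {g : ℕ} (hg : 2 ≤ g) (a b : R) :
    cornerReflection g a b ^ 2 =
      diagonal fun i : Fin g => if (i : ℕ) < 2 then a ^ 2 + b ^ 2 else 0 := by
  obtain ⟨m, rfl⟩ := Nat.exists_eq_add_of_le' hg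
  ext ⟨_ | _ | i, hi⟩ ⟨_ | _ | j, hj⟩ <;>
    simp [sq, mul_apply, Fin.sum_univ_succ, cornerReflection, diagonal_apply] <;> ring

/-- For `g ≥ 2` and integers `a, b`, let `Y` be the `g × g` integer matrix whose
upper-left `2 × 2` block is `[[a, b], [b, −a]]` and all other entries `0`, and let
`A = [[I + Y², Y], [Y, I]]`. Then the characteristic polynomial of `A` is
`(X − 1)^{2g−4} · (X² − (a² + b² + 2)X + 1)²`. -/
theorem charpoly_blockMatrix_eq (g : ℕ) (hg : 2 ≤ g) (a b : ℤ) :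
    (Matrix.fromBlocks
        (1 + (Matrix.of fun i j : Fin g =>
          if i.val = 0 ∧ j.val = 0 then a
          else if (i.val = 0 ∧ j.val = 1) ∨ (i.val = 1 ∧ j.val = 0) then b
          else if i.val = 1 ∧ j.val = 1 then -a else 0) ^ 2)
        (Matrix.of fun i j : Fin g =>
          if i.val = 0 ∧ j.val = 0 then a
          else if (i.val = 0 ∧ j.val = 1) ∨ (i.val = 1 ∧ j.val = 0) then b
          else if i.val = 1 ∧ j.val = 1 then -a else 0)
        (Matrix.of fun i j : Fin g =>
          if i.val = 0 ∧ j.val = 0 then a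
          else if (i.val = 0 ∧ j.val = 1) ∨ (i.val = 1 ∧ j.val = 0) then b
          else if i.val = 1 ∧ j.val = 1 then -a else 0)
        1).charpoly =
      (X - 1) ^ (2 * g - 4) * (X ^ 2 - C (a ^ 2 + b ^ 2 + 2) * X + 1) ^ 2 := by
  change (fromBlocks (1 + cornerReflection g a b ^ 2) (cornerReflection g a b)
    (cornerReflection g a b) 1).charpoly = _
  rw [charpoly_fromBlocks_one_add_sq, cornerReflection_sq hg, diagonal_map (map_zero C),
    det_smul_one_sub_smul_diagonal]
  obtain ⟨m, rfl⟩ := Nat.exists_eq_add_of_le hg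
  have hm : 2 * (2 + m) - 4 = 2 * m := by omega
  have hlow : ∀ i : Fin m, ¬(2 + (i : ℕ) < 2) := fun _ => by omega
  simp only [Fin.prod_univ_add, Fin.val_castAdd, Fin.val_natAdd, Fin.is_lt, if_true, hlow,
    if_false, map_zero, mul_zero, sub_zero, Finset.prod_const, Finset.card_univ, Fintype.card_fin,
    hm, pow_mul, map_add, C_ofNat]
  ring
end

section
/- Let g ≥ 1 and let A ∈ Sp(2g, ℤ) be a symmetric matrix. Suppose μ > 1 is an eigenvalue of A such that |α| ≤ μ for every complex eigenvalue α of A. Then every complex root β of the minimal polynomial of μ over ℚ satisfies 1/μ ≤ |β| ≤ μ; in particular, μ is a bi-Perron algebraic integer. -/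
/-!
A symplectic matrix `A` satisfies `A⁻¹ = J Aᵀ J⁻¹`, so `A⁻¹` is conjugate to `Aᵀ` and the spectrum
of `A` is closed under inversion (and misses `0`). Every Galois conjugate `β` of `μ` is a root of
the integer characteristic polynomial of `A`, hence an eigenvalue; so are `β⁻¹`, and the bound
`‖β‖, ‖β⁻¹‖ ≤ μ` gives `1 / μ ≤ ‖β‖ ≤ μ`. Integrality of `μ` comes from the same monic polynomial.
-/

open Matrix Polynomial

theorem Matrix.spectrum_transpose {R n : Type*} [CommRing R] [Fintype n] [DecidableEq n]
    (M : Matrix n n R) : spectrum R Mᵀ = spectrum R M := by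
  ext r
  have h : algebraMap R _ r - Mᵀ = (algebraMap R _ r - M)ᵀ := by
    rw [transpose_sub, algebraMap_eq_diagonal, diagonal_transpose]
  rw [spectrum.mem_iff, spectrum.mem_iff, h, isUnit_transpose]

namespace SymplecticGroup

variable {l : Type*} [DecidableEq l] [Fintype l]

theorem mem_iff_transpose_mul_fromBlocks_mul {R : Type*} [CommRing R]
    {A : Matrix (l ⊕ l) (l ⊕ l) R} :
    A ∈ symplecticGroup l R ↔ Aᵀ * fromBlocks 0 1 (-1) 0 * A = fromBlocks 0 1 (-1) 0 := by
  have hJ : fromBlocks 0 1 (-1) 0 = -J l R := by simp [J, fromBlocks_neg]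
  rw [mem_iff', hJ, mul_neg, neg_mul, neg_inj]

variable {K : Type*} [Field K] {A : Matrix (l ⊕ l) (l ⊕ l) K}

theorem zero_notMem_spectrum (hA : A ∈ symplecticGroup l K) : (0 : K) ∉ spectrum K A :=
  spectrum.zero_notMem K <| (isUnit_iff_isUnit_det A).mpr (symplectic_det hA)

theorem spectrum_inv_eq (hA : A ∈ symplecticGroup l K) : (spectrum K A)⁻¹ = spectrum K A := by
  obtain ⟨u, rfl⟩ : IsUnit A := (isUnit_iff_isUnit_det A).mpr (symplectic_det hA)
  obtain ⟨j, hj⟩ : IsUnit (J l K) := (isUnit_iff_isUnit_det _).mpr (isUnit_det_J l K)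
  have hinv : ((u⁻¹ : (Matrix (l ⊕ l) (l ⊕ l) K)ˣ) : Matrix (l ⊕ l) (l ⊕ l) K) =
      j * (u : Matrix (l ⊕ l) (l ⊕ l) K)ᵀ * (j⁻¹ : (Matrix (l ⊕ l) (l ⊕ l) K)ˣ) := by
    rw [coe_units_inv, coe_units_inv, hj, J_inv, inv_eq_symplectic_inv _ hA]
    simp only [Matrix.neg_mul, Matrix.mul_neg]
  rw [spectrum.map_inv u, hinv, spectrum.units_conjugate, Matrix.spectrum_transpose]

end SymplecticGroup

theorem Polynomial.isRoot_map_of_isRoot_map_minpoly {R K A L : Type*} [CommRing R] [Field K]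
    [Algebra R K] [Ring A] [Algebra R A] [Algebra K A] [IsScalarTower R K A]
    [CommRing L] [Algebra R L] [Algebra K L] [IsScalarTower R K L]
    {p : R[X]} {x : A} (hx : aeval x p = 0) {y : L}
    (hy : ((minpoly K x).map (algebraMap K L)).IsRoot y) : (p.map (algebraMap R L)).IsRoot y := by
  have hdvd : minpoly K x ∣ p.map (algebraMap R K) :=
    minpoly.dvd K x (by rwa [aeval_map_algebraMap])
  rw [IsScalarTower.algebraMap_eq R K L, ← Polynomial.map_map]
  exact eval_eq_zero_of_dvd_of_eval_eq_zero (Polynomial.map_dvd _ hdvd) hy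

theorem leading_eigenvalue_of_symmetric_symplectic_biPerron_general (g : ℕ)
    (A : Matrix (Fin g ⊕ Fin g) (Fin g ⊕ Fin g) ℤ)
    (hSp : Aᵀ * Matrix.fromBlocks 0 1 (-1) 0 * A = Matrix.fromBlocks 0 1 (-1) 0)
    (μ : ℝ)
    (hroot : (A.map (Int.cast : ℤ → ℂ)).charpoly.IsRoot (μ : ℂ))
    (hlead : ∀ α : ℂ, (A.map (Int.cast : ℤ → ℂ)).charpoly.IsRoot α → ‖α‖ ≤ μ) :
    IsIntegral ℤ μ ∧
      ∀ β : ℂ, ((minpoly ℚ μ).map (algebraMap ℚ ℂ)).IsRoot β →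
        1 / μ ≤ ‖β‖ ∧ ‖β‖ ≤ μ := by
  set B := A.map (Int.cast : ℤ → ℂ)
  have hB : B ∈ symplecticGroup (Fin g) ℂ :=
    SymplecticGroup.map_mem (SymplecticGroup.mem_iff_transpose_mul_fromBlocks_mul.mpr hSp)
      (Int.castRingHom ℂ)
  have hcharpoly : B.charpoly = A.charpoly.map (algebraMap ℤ ℂ) := by
    rw [algebraMap_int_eq]; exact charpoly_map A (Int.castRingHom ℂ)
  have hμ : aeval μ A.charpoly = 0 := by
    apply Complex.ofReal_injective
    rw [Complex.ofReal_zero, ← hroot.eq_zero, hcharpoly, eval_map_algebraMap]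
    exact (aeval_algebraMap_apply ℂ μ A.charpoly).symm
  have hspec : ∀ α ∈ spectrum ℂ B, ‖α‖ ≤ μ :=
    fun α hα => hlead α (mem_spectrum_iff_isRoot_charpoly.mp hα)
  refine ⟨⟨A.charpoly, A.charpoly_monic, hμ⟩, fun β hβ => ?_⟩
  have hβB : β ∈ spectrum ℂ B := by
    rw [mem_spectrum_iff_isRoot_charpoly, hcharpoly]
    exact isRoot_map_of_isRoot_map_minpoly hμ hβ
  have hβinvB : β⁻¹ ∈ spectrum ℂ B := by
    rw [← SymplecticGroup.spectrum_inv_eq hB]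
    exact Set.inv_mem_inv.mpr hβB
  have hβ_pos : 0 < ‖β‖ :=
    norm_pos_iff.mpr (ne_of_mem_of_not_mem hβB (SymplecticGroup.zero_notMem_spectrum hB))
  have hβ_le : ‖β‖ ≤ μ := hspec β hβB
  have hβinv_le : ‖β‖⁻¹ ≤ μ := norm_inv β ▸ hspec β⁻¹ hβinvB
  refine ⟨?_, hβ_le⟩
  rwa [one_div_le (hβ_pos.trans_le hβ_le) hβ_pos, one_div]

/-- Let `g ≥ 1` and `A ∈ Sp(2g, ℤ)` be symmetric. If `μ > 1` is an eigenvalue of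
`A` with `|α| ≤ μ` for every complex eigenvalue `α` of `A`, then every complex root `β` of
the minimal polynomial of `μ` over `ℚ` satisfies `1/μ ≤ |β| ≤ μ`; in particular `μ` is a
bi-Perron algebraic integer. -/
theorem leading_eigenvalue_of_symmetric_symplectic_biPerron (g : ℕ) (hg : 1 ≤ g)
    (A : Matrix (Fin g ⊕ Fin g) (Fin g ⊕ Fin g) ℤ)
    (hSp : Aᵀ * Matrix.fromBlocks 0 1 (-1) 0 * A = Matrix.fromBlocks 0 1 (-1) 0)
    (hsymm : A.IsSymm) (μ : ℝ) (hμ : 1 < μ)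
    (hroot : (A.map (Int.cast : ℤ → ℂ)).charpoly.IsRoot (μ : ℂ))
    (hlead : ∀ α : ℂ, (A.map (Int.cast : ℤ → ℂ)).charpoly.IsRoot α → ‖α‖ ≤ μ) :
    IsIntegral ℤ μ ∧
      ∀ β : ℂ, ((minpoly ℚ μ).map (algebraMap ℚ ℂ)).IsRoot β →
        1 / μ ≤ ‖β‖ ∧ ‖β‖ ≤ μ :=
  leading_eigenvalue_of_symmetric_symplectic_biPerron_general g A hSp μ hroot hlead
end

section
/- Let g ≥ 2, let a, b be integers not both zero, set λ = √(a² + b²), and let Z be a symmetric (g − 2) × (g − 2) integer matrix all of whose eigenvalues lie in the interval [−λ, λ]. Let Y be the g × g block-diagonal integer matrix with blocks [[a, b], [b, −a]] and Z, and let A be the 2g × 2g block matrix [[I_g + Y², Y], [Y, I_g]]. Then A ∈ Sp(2g, ℤ), the larger root μ of X² − (λ² + 2)X + 1 is an eigenvalue of A whose multiplicity as a root of the characteristic polynomial of A is at least 2, and every complex eigenvalue α of A satisfies |α| ≤ μ. -/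
open Matrix Polynomial

/-!
If an orthogonal `U` diagonalises the real symmetric matrix `Y` as `diag(dᵢ)`, then `diag(U, U)`
conjugates `A = [[1 + Y², Y], [Y, 1]]` into the matrix built in the same way from `diag(dᵢ)`,
so the characteristic polynomial of `A` is `∏ᵢ (X² - (dᵢ² + 2) X + 1)`. The eigenvalues of `Y`
are `±λ`, as `[[a, b], [b, -a]]² = λ²`, together with those of `Z`, which lie in `[-λ, λ]`.
Hence `μ` is a root of the two factors with `dᵢ = ±λ`, and each factor, having
`2 ≤ dᵢ² + 2 ≤ λ² + 2`, has real roots of size at most `μ`.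
-/

theorem Finset.sq_dvd_prod_of_dvd {ι M : Type*} [Fintype ι] [CommMonoid M] {f : ι → M} {a : M}
    {i j : ι} (hij : i ≠ j) (hi : a ∣ f i) (hj : a ∣ f j) : a ^ 2 ∣ ∏ k, f k := by
  classical
  calc a ^ 2 ∣ f i * f j := sq a ▸ mul_dvd_mul hi hj
    _ = ∏ k ∈ {i, j}, f k := (prod_pair hij).symm
    _ ∣ ∏ k, f k := prod_dvd_prod_of_subset _ _ _ (subset_univ _)

noncomputable def largerRoot (c : ℝ) : ℝ := (c + √(c ^ 2 - 4)) / 2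

section largerRoot

variable {c : ℝ}

theorem largerRoot_sq_sub_mul_add_one (hc : 2 ≤ c) :
    largerRoot c ^ 2 - c * largerRoot c + 1 = 0 := by
  have := Real.sq_sqrt (show 0 ≤ c ^ 2 - 4 by nlinarith)
  unfold largerRoot
  linear_combination this / 4

theorem X_sub_C_largerRoot_dvd (hc : 2 ≤ c) :
    X - C (largerRoot c : ℂ) ∣ X ^ 2 - C (c : ℂ) * X + 1 := by
  rw [dvd_iff_isRoot]
  simp only [IsRoot, eval_add, eval_sub, eval_mul, eval_pow, eval_X, eval_C, eval_one]
  exact_mod_cast largerRoot_sq_sub_mul_add_one hc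

theorem largerRoot_le_largerRoot {s : ℝ} (hc : 0 ≤ c) (hcs : c ≤ s) :
    largerRoot c ≤ largerRoot s := by
  unfold largerRoot
  gcongr

theorem norm_le_largerRoot_of_isRoot (hc : 2 ≤ c) {α : ℂ}
    (hα : (X ^ 2 - C (c : ℂ) * X + 1).IsRoot α) :
    ‖α‖ ≤ largerRoot c := by
  set u := √(c ^ 2 - 4)
  have hu : 0 ≤ u := Real.sqrt_nonneg _
  have hu2 : u ^ 2 = c ^ 2 - 4 := Real.sq_sqrt (by nlinarith)
  have hdiscrim : discrim 1 (-(c : ℂ)) 1 = (u : ℂ) * (u : ℂ) := by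
    rw [discrim, ← sq]
    exact_mod_cast (by linear_combination -hu2 : (-c) ^ 2 - 4 * 1 * 1 = u ^ 2)
  have hα' : 1 * (α * α) + -(c : ℂ) * α + 1 = 0 := by
    simpa [sq, sub_eq_add_neg] using hα
  rcases (quadratic_eq_zero_iff one_ne_zero hdiscrim α).1 hα' with rfl | rfl
  · rw [show (-(-(c : ℂ)) + u) / (2 * 1) = (((c + u) / 2 : ℝ) : ℂ) by push_cast; ring,
      Complex.norm_real, Real.norm_of_nonneg (by positivity)]
    rfl
  · rw [show (-(-(c : ℂ)) - u) / (2 * 1) = (((c - u) / 2 : ℝ) : ℂ) by push_cast; ring,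
      Complex.norm_real, Real.norm_eq_abs, largerRoot, abs_le]
    constructor <;> linarith

end largerRoot

namespace Matrix

variable {n R : Type*} [Fintype n] [DecidableEq n] [CommRing R]

theorem fromBlocks_one_add_sq_symplectic {Y : Matrix n n R} (hY : Y.IsSymm) :
    (fromBlocks (1 + Y ^ 2) Y Y 1)ᵀ * fromBlocks 0 1 (-1) 0 * fromBlocks (1 + Y ^ 2) Y Y 1 =
      fromBlocks 0 1 (-1) 0 := by
  rw [fromBlocks_transpose, transpose_add, transpose_one, transpose_pow, hY.eq,
    fromBlocks_multiply, fromBlocks_multiply, fromBlocks_inj]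
  exact ⟨by noncomm_ring, by noncomm_ring, by noncomm_ring, by noncomm_ring⟩

theorem fromBlocks_one_add_sq_map {S : Type*} [CommRing S] (f : R →+* S) (Y : Matrix n n R) :
    (fromBlocks (1 + Y ^ 2) Y Y 1).map f =
      fromBlocks (1 + Y.map f ^ 2) (Y.map f) (Y.map f) 1 := by
  rw [fromBlocks_map, ← f.mapMatrix_apply, map_add, map_one, map_pow, f.mapMatrix_apply,
    Matrix.map_one _ f.map_zero f.map_one]

theorem charpoly_fromBlocks_one_add_sq_conj {U V : Matrix n n R} (hUV : U * V = 1)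
    (hVU : V * U = 1) (D : Matrix n n R) :
    (fromBlocks (1 + (U * D * V) ^ 2) (U * D * V) (U * D * V) 1).charpoly =
      (fromBlocks (1 + D ^ 2) D D 1).charpoly := by
  have hsq : (U * D * V) ^ 2 = U * D ^ 2 * V := by
    rw [sq, sq, mul_assoc, ← mul_assoc V, ← mul_assoc V, hVU, one_mul, ← mul_assoc,
      ← mul_assoc]
  have hconj : fromBlocks (1 + (U * D * V) ^ 2) (U * D * V) (U * D * V) 1 =
      fromBlocks U 0 0 U * (fromBlocks (1 + D ^ 2) D D 1 * fromBlocks V 0 0 V) := by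
    rw [hsq, fromBlocks_multiply, fromBlocks_multiply]
    simp [hUV, mul_add, add_mul, mul_assoc]
  rw [hconj, charpoly_mul_comm, mul_assoc, fromBlocks_multiply V]
  simp [hVU]

theorem det_fromBlocks_diagonal (w x y z : n → R) :
    (fromBlocks (diagonal w) (diagonal x) (diagonal y) (diagonal z)).det =
      ∏ i, (w i * z i - x i * y i) := by
  let e : n ⊕ n ≃ Fin 2 × n :=
    (Equiv.boolProdEquivSum n).symm.trans (Equiv.prodCongr finTwoEquiv.symm (Equiv.refl n))
  have h : fromBlocks (diagonal w) (diagonal x) (diagonal y) (diagonal z) =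
      (blockDiagonal fun i => !![w i, x i; y i, z i]).submatrix e e := by
    ext (i | i) (j | j) <;> by_cases h : i = j <;>
      simp [e, blockDiagonal_apply, h, finTwoEquiv]
  simp [h, det_blockDiagonal, det_fin_two_of]

theorem charpoly_fromBlocks_one_add_sq_diagonal (d : n → R) :
    (fromBlocks (1 + diagonal d ^ 2) (diagonal d) (diagonal d) 1).charpoly =
      ∏ i, (X ^ 2 - C (d i ^ 2 + 2) * X + 1) := by
  rw [← diagonal_one, sq, diagonal_mul_diagonal, diagonal_add, charpoly, charmatrix_fromBlocks,
    charmatrix_diagonal, charmatrix_diagonal, diagonal_map (map_zero _), diagonal_neg,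
    det_fromBlocks_diagonal]
  refine Finset.prod_congr rfl fun i _ => ?_
  simp only [map_add, map_mul, map_pow, map_one, map_ofNat]
  ring

theorem IsHermitian.charpoly_fromBlocks_one_add_sq {𝕜 : Type*} [RCLike 𝕜] {Y : Matrix n n 𝕜}
    (hY : Y.IsHermitian) :
    (Matrix.fromBlocks (1 + Y ^ 2) Y Y 1).charpoly =
      ∏ i, (X ^ 2 - C ((hY.eigenvalues i : 𝕜) ^ 2 + 2) * X + 1) := by
  conv_lhs => rw [hY.spectral_theorem, Unitary.conjStarAlgAut_apply]
  rw [charpoly_fromBlocks_one_add_sq_conj (Unitary.mul_star_self_of_mem (SetLike.coe_mem _))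
    (Unitary.star_mul_self_of_mem (SetLike.coe_mem _)), charpoly_fromBlocks_one_add_sq_diagonal]
  rfl

theorem IsHermitian.isRoot_charpoly_iff {𝕜 : Type*} [RCLike 𝕜] {A : Matrix n n 𝕜}
    (hA : A.IsHermitian) (t : ℝ) :
    A.charpoly.IsRoot (t : 𝕜) ↔ ∃ i, hA.eigenvalues i = t := by
  rw [← mem_roots (charpoly_monic A).ne_zero, hA.roots_charpoly_eq_eigenvalues]
  simp

theorem charpoly_reflection [Nontrivial R] (a b : R) :
    !![a, b; b, -a].charpoly = X ^ 2 - C (a ^ 2 + b ^ 2) := by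
  rw [charpoly_fin_two, trace_fin_two_of, det_fin_two_of]
  simp only [add_neg_cancel, map_zero, zero_mul, sub_eq_add_neg, ← map_neg]
  ring_nf

theorem charpoly_map_fromBlocks_reflection {S : Type*} [CommRing S] [Nontrivial S]
    {m : Type*} [Fintype m] [DecidableEq m] (f : R →+* S) (a b : R) (Z : Matrix m m R) :
    ((fromBlocks !![a, b; b, -a] 0 0 Z).map f).charpoly =
      (X ^ 2 - C (f a ^ 2 + f b ^ 2)) * (Z.map f).charpoly := by
  rw [fromBlocks_map, Matrix.map_zero _ f.map_zero, charpoly_fromBlocks_zero₁₂,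
    ← charpoly_reflection]
  congr
  ext i j
  fin_cases i <;> fin_cases j <;> simp

namespace IsHermitian

theorem eigenvalues_sq_le {Y : Matrix n n ℝ} (hY : Y.IsHermitian) {l : ℝ} {p : ℝ[X]}
    (hYp : Y.charpoly = (X ^ 2 - C (l ^ 2)) * p) (hp : ∀ t, p.IsRoot t → t ∈ Set.Icc (-l) l)
    (i : n) : hY.eigenvalues i ^ 2 ≤ l ^ 2 := by
  have hi : Y.charpoly.IsRoot (hY.eigenvalues i) := (hY.isRoot_charpoly_iff _).2 ⟨i, rfl⟩
  rw [hYp, IsRoot, eval_mul, mul_eq_zero] at hi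
  rcases hi with hi | hi
  · simp only [eval_sub, eval_pow, eval_X, eval_C, sub_eq_zero] at hi
    exact hi.le
  · exact sq_le_sq' (hp _ hi).1 (hp _ hi).2

theorem exists_ne_eigenvalues_sq_eq {Y : Matrix n n ℝ} (hY : Y.IsHermitian) {l : ℝ} {p : ℝ[X]}
    (hYp : Y.charpoly = (X ^ 2 - C (l ^ 2)) * p) (hl : l ≠ 0) :
    ∃ i j, i ≠ j ∧ hY.eigenvalues i ^ 2 = l ^ 2 ∧ hY.eigenvalues j ^ 2 = l ^ 2 := by
  have hroot (t : ℝ) (ht : t ^ 2 = l ^ 2) : ∃ i, hY.eigenvalues i = t :=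
    (hY.isRoot_charpoly_iff t).1 (by simp [hYp, ht])
  obtain ⟨i, hi⟩ := hroot l rfl
  obtain ⟨j, hj⟩ := hroot (-l) (neg_sq l)
  refine ⟨i, j, ?_, by rw [hi], by rw [hj, neg_sq]⟩
  rintro rfl
  exact hl (by linarith)

theorem charpoly_map_complex_fromBlocks_one_add_sq {Y : Matrix n n ℝ} (hY : Y.IsHermitian) :
    ((Matrix.fromBlocks (1 + Y ^ 2) Y Y 1).map (algebraMap ℝ ℂ)).charpoly =
      ∏ i, (X ^ 2 - C ((hY.eigenvalues i ^ 2 + 2 : ℝ) : ℂ) * X + 1) := by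
  rw [charpoly_map, hY.charpoly_fromBlocks_one_add_sq, Polynomial.map_prod]
  simp

theorem two_le_rootMultiplicity_largerRoot {Y : Matrix n n ℝ} (hY : Y.IsHermitian) {l : ℝ}
    {p : ℝ[X]} (hYp : Y.charpoly = (X ^ 2 - C (l ^ 2)) * p) (hl : l ≠ 0) :
    2 ≤ rootMultiplicity (largerRoot (l ^ 2 + 2) : ℂ)
      ((Matrix.fromBlocks (1 + Y ^ 2) Y Y 1).map (algebraMap ℝ ℂ)).charpoly := by
  obtain ⟨i, j, hij, hi, hj⟩ := hY.exists_ne_eigenvalues_sq_eq hYp hl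
  rw [le_rootMultiplicity_iff (charpoly_monic _).ne_zero,
    hY.charpoly_map_complex_fromBlocks_one_add_sq]
  refine Finset.sq_dvd_prod_of_dvd hij ?_ ?_
  · rw [hi]; exact X_sub_C_largerRoot_dvd (le_add_of_nonneg_left (sq_nonneg _))
  · rw [hj]; exact X_sub_C_largerRoot_dvd (le_add_of_nonneg_left (sq_nonneg _))

theorem norm_le_largerRoot_of_isRoot_charpoly {Y : Matrix n n ℝ} (hY : Y.IsHermitian) {l : ℝ}
    {p : ℝ[X]} (hYp : Y.charpoly = (X ^ 2 - C (l ^ 2)) * p)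
    (hp : ∀ t, p.IsRoot t → t ∈ Set.Icc (-l) l) {α : ℂ}
    (hα : ((Matrix.fromBlocks (1 + Y ^ 2) Y Y 1).map (algebraMap ℝ ℂ)).charpoly.IsRoot α) :
    ‖α‖ ≤ largerRoot (l ^ 2 + 2) := by
  rw [hY.charpoly_map_complex_fromBlocks_one_add_sq, IsRoot, eval_prod,
    Finset.prod_eq_zero_iff] at hα
  obtain ⟨i, -, hi⟩ := hα
  calc ‖α‖ ≤ largerRoot (hY.eigenvalues i ^ 2 + 2) :=
        norm_le_largerRoot_of_isRoot (le_add_of_nonneg_left (sq_nonneg _)) hi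
    _ ≤ largerRoot (l ^ 2 + 2) :=
        largerRoot_le_largerRoot (by positivity)
          (add_le_add_left (hY.eigenvalues_sq_le hYp hp i) 2)

end IsHermitian

end Matrix

theorem blockDiag_symplectic_leading_eigenvalue_general (g : ℕ) (a b : ℤ)
    (hab : ¬(a = 0 ∧ b = 0)) (Z : Matrix (Fin (g - 2)) (Fin (g - 2)) ℤ) (hZ : Z.IsSymm)
    (hZeig : ∀ t : ℝ, (Z.map (Int.cast : ℤ → ℝ)).charpoly.IsRoot t →
      t ∈ Set.Icc (-Real.sqrt ((a : ℝ) ^ 2 + (b : ℝ) ^ 2))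
        (Real.sqrt ((a : ℝ) ^ 2 + (b : ℝ) ^ 2))) :
    ∀ Y : Matrix (Fin 2 ⊕ Fin (g - 2)) (Fin 2 ⊕ Fin (g - 2)) ℤ,
      Y = Matrix.fromBlocks !![a, b; b, -a] 0 0 Z →
      ∀ A : Matrix ((Fin 2 ⊕ Fin (g - 2)) ⊕ (Fin 2 ⊕ Fin (g - 2)))
          ((Fin 2 ⊕ Fin (g - 2)) ⊕ (Fin 2 ⊕ Fin (g - 2))) ℤ,
        A = Matrix.fromBlocks (1 + Y ^ 2) Y Y 1 →
        ∀ μ : ℝ, μ = ((((a : ℝ) ^ 2 + (b : ℝ) ^ 2) + 2) +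
            Real.sqrt (((((a : ℝ) ^ 2 + (b : ℝ) ^ 2) + 2)) ^ 2 - 4)) / 2 →
        Aᵀ * Matrix.fromBlocks 0 1 (-1) 0 * A = Matrix.fromBlocks 0 1 (-1) 0 ∧
        2 ≤ Polynomial.rootMultiplicity (μ : ℂ) (A.map (Int.cast : ℤ → ℂ)).charpoly ∧
        ∀ α : ℂ, (A.map (Int.cast : ℤ → ℂ)).charpoly.IsRoot α → ‖α‖ ≤ μ := by
  intro Y hY A hA μ hμ
  have hYsymm : Y.IsSymm := hY ▸ IsSymm.fromBlocks
    (by ext i j; fin_cases i <;> fin_cases j <;> rfl) (by simp) hZ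
  refine ⟨hA ▸ fromBlocks_one_add_sq_symplectic hYsymm, ?_⟩
  set l := √((a : ℝ) ^ 2 + (b : ℝ) ^ 2)
  have hl2 : l ^ 2 = (a : ℝ) ^ 2 + (b : ℝ) ^ 2 := Real.sq_sqrt (by positivity)
  have hl : l ≠ 0 := by
    intro hl0
    have : (a : ℝ) * a + b * b = 0 := by rw [← sq, ← sq, ← hl2, hl0, zero_pow two_ne_zero]
    exact hab (by exact_mod_cast mul_self_add_mul_self_eq_zero.1 this)
  set Yr := Y.map (Int.cast : ℤ → ℝ) with hYr_def
  have hYr : Yr.IsHermitian := isHermitian_iff_isSymm.2 (hYsymm.map _)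
  have hcharY : Yr.charpoly = (X ^ 2 - C (l ^ 2)) * (Z.map (Int.cast : ℤ → ℝ)).charpoly := by
    rw [hYr_def, hY, hl2]
    exact charpoly_map_fromBlocks_reflection (Int.castRingHom ℝ) a b Z
  have hAr : A.map (Int.cast : ℤ → ℝ) = fromBlocks (1 + Yr ^ 2) Yr Yr 1 :=
    hA ▸ fromBlocks_one_add_sq_map (Int.castRingHom ℝ) Y
  have hAC : A.map (Int.cast : ℤ → ℂ) = (A.map (Int.cast : ℤ → ℝ)).map (algebraMap ℝ ℂ) := by
    ext; simp
  have hμl : μ = largerRoot (l ^ 2 + 2) := by rw [hμ, hl2]; rfl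
  rw [hAC, hAr, hμl]
  exact ⟨hYr.two_le_rootMultiplicity_largerRoot hcharY hl,
    fun α hα => hYr.norm_le_largerRoot_of_isRoot_charpoly hcharY hZeig hα⟩

/-- Let `g ≥ 2`, `a, b` integers not both zero, `λ = √(a² + b²)`, and `Z` a
symmetric `(g−2) × (g−2)` integer matrix all of whose eigenvalues lie in `[−λ, λ]`. Let `Y`
be the block-diagonal matrix with blocks `[[a, b], [b, −a]]` and `Z`, and
`A = [[I + Y², Y], [Y, I]]`. Then `A ∈ Sp(2g, ℤ)`, the larger root `μ` of
`X² − (λ² + 2)X + 1` is an eigenvalue of `A` of multiplicity at least `2` in the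
characteristic polynomial of `A`, and every complex eigenvalue `α` of `A` satisfies
`|α| ≤ μ`. -/
theorem blockDiag_symplectic_leading_eigenvalue (g : ℕ) (hg : 2 ≤ g) (a b : ℤ)
    (hab : ¬(a = 0 ∧ b = 0)) (Z : Matrix (Fin (g - 2)) (Fin (g - 2)) ℤ) (hZ : Z.IsSymm)
    (hZeig : ∀ t : ℝ, (Z.map (Int.cast : ℤ → ℝ)).charpoly.IsRoot t →
      t ∈ Set.Icc (-Real.sqrt ((a : ℝ) ^ 2 + (b : ℝ) ^ 2))
        (Real.sqrt ((a : ℝ) ^ 2 + (b : ℝ) ^ 2))) :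
    ∀ Y : Matrix (Fin 2 ⊕ Fin (g - 2)) (Fin 2 ⊕ Fin (g - 2)) ℤ,
      Y = Matrix.fromBlocks !![a, b; b, -a] 0 0 Z →
      ∀ A : Matrix ((Fin 2 ⊕ Fin (g - 2)) ⊕ (Fin 2 ⊕ Fin (g - 2)))
          ((Fin 2 ⊕ Fin (g - 2)) ⊕ (Fin 2 ⊕ Fin (g - 2))) ℤ,
        A = Matrix.fromBlocks (1 + Y ^ 2) Y Y 1 →
        ∀ μ : ℝ, μ = ((((a : ℝ) ^ 2 + (b : ℝ) ^ 2) + 2) +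
            Real.sqrt (((((a : ℝ) ^ 2 + (b : ℝ) ^ 2) + 2)) ^ 2 - 4)) / 2 →
        Aᵀ * Matrix.fromBlocks 0 1 (-1) 0 * A = Matrix.fromBlocks 0 1 (-1) 0 ∧
        2 ≤ Polynomial.rootMultiplicity (μ : ℂ) (A.map (Int.cast : ℤ → ℂ)).charpoly ∧
        ∀ α : ℂ, (A.map (Int.cast : ℤ → ℂ)).charpoly.IsRoot α → ‖α‖ ≤ μ :=
  blockDiag_symplectic_leading_eigenvalue_general g a b hab Z hZ hZeig
end

section
/- Let Q = {(n, m) ∈ ℤ² : the polynomial x⁴ + n x³ + m x² + n x + 1 has no real root}. Then the asymptotic density of Q in ℤ² is zero: the number of pairs (n, m) ∈ Q with max(|n|, |m|) ≤ K, divided by (2K + 1)², tends to 0 as K → ∞. -/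
lemma key_no_root (n m : ℤ)
    (h : ∀ x : ℝ, x ^ 4 + (n : ℝ) * x ^ 3 + (m : ℝ) * x ^ 2 + (n : ℝ) * x + 1 ≠ 0) :
    |n| ≤ 4 ∨ n ^ 2 ≤ 4 * m := by
  by_contra hc
  push_neg at hc
  obtain ⟨h4, hm⟩ := hc
  have hn5 : 5 ≤ |n| := h4
  have hn2 : (25 : ℤ) ≤ n ^ 2 := by
    have := sq_abs n
    nlinarith [sq_nonneg (|n| - 5)]
  have hmn : 4 * m ≤ n ^ 2 - 1 := by omega
  set y : ℝ := -(n : ℝ) / 2 with hy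
  have hn2R : (25 : ℝ) ≤ (n : ℝ) ^ 2 := by exact_mod_cast hn2
  have hd : (0 : ℝ) ≤ y ^ 2 - 4 := by
    have : y ^ 2 = (n : ℝ) ^ 2 / 4 := by rw [hy]; ring
    nlinarith
  set s : ℝ := Real.sqrt (y ^ 2 - 4) with hsdef
  have hs : s ^ 2 = y ^ 2 - 4 := Real.sq_sqrt hd
  set x₀ : ℝ := (y + s) / 2 with hx0def
  have h1 : x₀ ^ 2 - y * x₀ + 1 = 0 := by
    rw [hx0def]; linear_combination hs / 4
  have hx0ne : (0 : ℝ) < x₀ ^ 2 := by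
    rcases eq_or_ne x₀ 0 with h0 | h0
    · rw [h0] at h1; norm_num at h1
    · positivity
  set c : ℝ := y ^ 2 + (n : ℝ) * y + (m : ℝ) - 2 with hcdef
  have hcneg : c < 0 := by
    have hmR : 4 * (m : ℝ) ≤ (n : ℝ) ^ 2 - 1 := by exact_mod_cast hmn
    rw [hcdef, hy]; nlinarith
  have hq : x₀ ^ 4 + (n : ℝ) * x₀ ^ 3 + (m : ℝ) * x₀ ^ 2 + (n : ℝ) * x₀ + 1 = x₀ ^ 2 * c := by
    rw [hcdef]; linear_combination (x₀ ^ 2 + ((n : ℝ) + y) * x₀ + 1) * h1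
  have hqneg : x₀ ^ 4 + (n : ℝ) * x₀ ^ 3 + (m : ℝ) * x₀ ^ 2 + (n : ℝ) * x₀ + 1 < 0 := by
    rw [hq]; exact mul_neg_of_pos_of_neg hx0ne hcneg
  set f : ℝ → ℝ := fun x => x ^ 4 + (n : ℝ) * x ^ 3 + (m : ℝ) * x ^ 2 + (n : ℝ) * x + 1 with hf
  have hcont : ContinuousOn f (Set.uIcc 0 x₀) := by
    apply Continuous.continuousOn; rw [hf]; continuity
  have hsub := intermediate_value_uIcc hcont
  have h0mem : (0 : ℝ) ∈ Set.uIcc (f 0) (f x₀) := by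
    have hf0 : f 0 = 1 := by rw [hf]; norm_num
    have hfx : f x₀ < 0 := hqneg
    rw [hf0]
    exact Set.mem_uIcc.mpr (Or.inr ⟨le_of_lt hfx, zero_le_one⟩)
  obtain ⟨x, _, hx⟩ := hsub h0mem
  exact h x hx

lemma count_bound (K : ℕ) :
    (Set.ncard { p : ℤ × ℤ |
        (∀ x : ℝ,
          x ^ 4 + (p.1 : ℝ) * x ^ 3 + (p.2 : ℝ) * x ^ 2 + (p.1 : ℝ) * x + 1 ≠ 0) ∧
        max |p.1| |p.2| ≤ (K : ℤ) } : ℝ) ≤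
      (2 * (Nat.sqrt (4 * K) : ℝ) + 9) * (2 * (K : ℝ) + 1) := by
  set B : ℤ := (Nat.sqrt (4 * K) : ℤ) + 4 with hB
  set box : Finset (ℤ × ℤ) := Finset.Icc (-B) B ×ˢ Finset.Icc (-(K : ℤ)) (K : ℤ) with hbox
  have hsub : { p : ℤ × ℤ |
      (∀ x : ℝ,
        x ^ 4 + (p.1 : ℝ) * x ^ 3 + (p.2 : ℝ) * x ^ 2 + (p.1 : ℝ) * x + 1 ≠ 0) ∧
      max |p.1| |p.2| ≤ (K : ℤ) } ⊆ ↑box := by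
    rintro ⟨n, m⟩ ⟨hroot, hmax⟩
    have hmK : |m| ≤ (K : ℤ) := le_trans (le_max_right _ _) hmax
    have hnabs : |n| ≤ B := by
      rcases key_no_root n m hroot with h4 | hq
      · have : (0 : ℤ) ≤ (Nat.sqrt (4 * K) : ℤ) := Int.natCast_nonneg _
        omega
      · have hm4 : n ^ 2 ≤ 4 * (K : ℤ) := by
          have : m ≤ (K : ℤ) := le_trans (le_abs_self m) hmK
          omega
        have hnat : |n|.toNat * |n|.toNat ≤ 4 * K := by
          have h1 : ((|n|.toNat * |n|.toNat : ℕ) : ℤ) ≤ ((4 * K : ℕ) : ℤ) := by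
            push_cast
            rw [Int.toNat_of_nonneg (abs_nonneg n)]
            calc |n| * |n| = n ^ 2 := by rw [← abs_mul, abs_mul_self n]; ring
            _ ≤ 4 * (K : ℤ) := hm4
          exact_mod_cast h1
        have := Nat.le_sqrt.mpr hnat
        have h2 : (|n|.toNat : ℤ) ≤ (Nat.sqrt (4 * K) : ℤ) := by exact_mod_cast this
        rw [Int.toNat_of_nonneg (abs_nonneg n)] at h2
        omega
    simp only [hbox, Finset.coe_product, Set.mem_prod, Finset.mem_coe, Finset.mem_Icc]
    exact ⟨abs_le.mp hnabs, abs_le.mp hmK⟩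
  have hcard : Set.ncard { p : ℤ × ℤ |
      (∀ x : ℝ,
        x ^ 4 + (p.1 : ℝ) * x ^ 3 + (p.2 : ℝ) * x ^ 2 + (p.1 : ℝ) * x + 1 ≠ 0) ∧
      max |p.1| |p.2| ≤ (K : ℤ) } ≤ box.card := by
    calc _ ≤ (↑box : Set (ℤ × ℤ)).ncard := Set.ncard_le_ncard hsub box.finite_toSet
    _ = box.card := Set.ncard_coe_finset box
  have hboxcard : (box.card : ℝ) ≤ (2 * (Nat.sqrt (4 * K) : ℝ) + 9) * (2 * (K : ℝ) + 1) := by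
    rw [hbox, Finset.card_product, Int.card_Icc, Int.card_Icc]
    have e1 : ((B + 1 - -B).toNat : ℤ) = 2 * B + 1 := by
      rw [Int.toNat_of_nonneg (by omega : (0:ℤ) ≤ B + 1 - -B)]; ring
    have e2 : (((K : ℤ) + 1 - -(K : ℤ)).toNat : ℤ) = 2 * (K : ℤ) + 1 := by
      rw [Int.toNat_of_nonneg (by omega)]; ring
    push_cast
    have e1' : (((B + 1 - -B).toNat : ℤ) : ℝ) = 2 * (B : ℝ) + 1 := by exact_mod_cast e1
    have e2' : ((((K : ℤ) + 1 - -(K : ℤ)).toNat : ℤ) : ℝ) = 2 * (K : ℝ) + 1 := by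
      exact_mod_cast e2
    push_cast at e1' e2'
    rw [e1', e2', hB]
    push_cast
    nlinarith [Nat.cast_nonneg (α := ℝ) (Nat.sqrt (4 * K)), Nat.cast_nonneg (α := ℝ) K]
  calc (Set.ncard _ : ℝ) ≤ (box.card : ℝ) := by exact_mod_cast hcard
  _ ≤ _ := hboxcard

/-- Let `Q = {(n, m) ∈ ℤ² : x⁴ + n x³ + m x² + n x + 1 has no real root}`.
Then `Q` has asymptotic density zero in `ℤ²`: the number of pairs in `Q` with
`max(|n|, |m|) ≤ K`, divided by `(2K + 1)²`, tends to `0` as `K → ∞`. -/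
theorem density_no_real_root_zero :
    Filter.Tendsto
      (fun K : ℕ =>
        ((Set.ncard { p : ℤ × ℤ |
            (∀ x : ℝ,
              x ^ 4 + (p.1 : ℝ) * x ^ 3 + (p.2 : ℝ) * x ^ 2 + (p.1 : ℝ) * x + 1 ≠ 0) ∧
            max |p.1| |p.2| ≤ (K : ℤ) } : ℝ) /
          (2 * (K : ℝ) + 1) ^ 2))
      Filter.atTop (nhds 0) := by
  have hs0 : Filter.Tendsto Real.sqrt Filter.atTop Filter.atTop :=
    Filter.tendsto_atTop_atTop.mpr fun b => ⟨b ^ 2, fun a ha =>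
      le_trans (le_abs_self b)
        (by rw [← Real.sqrt_sq_eq_abs]; exact Real.sqrt_le_sqrt ha)⟩
  have hsqrt : Filter.Tendsto (fun K : ℕ => Real.sqrt K) Filter.atTop Filter.atTop :=
    hs0.comp tendsto_natCast_atTop_atTop
  have hlim : Filter.Tendsto (fun K : ℕ => 13 / Real.sqrt K) Filter.atTop (nhds 0) := by
    have := hsqrt.inv_tendsto_atTop.const_mul (13 : ℝ)
    simpa [div_eq_mul_inv] using this
  apply squeeze_zero' ?_ ?_ hlim
  · filter_upwards [] with K
    positivity
  · filter_upwards [Filter.eventually_ge_atTop 1] with K hK1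
    have hK1R : (1 : ℝ) ≤ (K : ℝ) := by exact_mod_cast hK1
    have hsK : (1 : ℝ) ≤ Real.sqrt K := by
      rw [show (1:ℝ) = Real.sqrt 1 by simp]
      exact Real.sqrt_le_sqrt hK1R
    have hsKsq : Real.sqrt K * Real.sqrt K = (K : ℝ) :=
      Real.mul_self_sqrt (by positivity)
    have hden : (0 : ℝ) < 2 * (K : ℝ) + 1 := by linarith
    have hnum := count_bound K
    have hNsqrt : (Nat.sqrt (4 * K) : ℝ) ≤ 2 * Real.sqrt K := by
      calc (Nat.sqrt (4 * K) : ℝ) ≤ Real.sqrt ((4 * K : ℕ) : ℝ) :=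
        Real.nat_sqrt_le_real_sqrt
      _ = 2 * Real.sqrt K := by
        push_cast
        rw [show (4 : ℝ) * K = 4 * K by ring, Real.sqrt_mul (by norm_num : (0:ℝ) ≤ 4),
          show Real.sqrt 4 = 2 by
            rw [show (4:ℝ) = 2 ^ 2 by norm_num, Real.sqrt_sq (by norm_num : (0:ℝ) ≤ 2)]]
    have step1 : (Set.ncard { p : ℤ × ℤ |
        (∀ x : ℝ,
          x ^ 4 + (p.1 : ℝ) * x ^ 3 + (p.2 : ℝ) * x ^ 2 + (p.1 : ℝ) * x + 1 ≠ 0) ∧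
        max |p.1| |p.2| ≤ (K : ℤ) } : ℝ) ≤ 13 * Real.sqrt K * (2 * (K : ℝ) + 1) :=
      le_trans hnum (by nlinarith)
    rw [div_le_div_iff₀ (by positivity) (by positivity)]
    have step2 := mul_le_mul_of_nonneg_right step1 (Real.sqrt_nonneg (K : ℝ))
    refine le_trans step2 ?_
    nlinarith
end
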